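/- Every substitution instance of the Dummett axiom (x→y)∨(y→x), of the height-2 Peirce axiom ((x→(((y→z)→y)→y))→x)→x, and of the Umezawa axiom x∨(¬y∨(x→y)) holds at the world t under every assignment in the two-world G3 semantics. -/

import Mathlib

/-- The three Caminada labels. -/
inductive Label where
  | in_ : Label
  | out : Label
  | und : Label
deriving DecidableEq

/-- Propositional intuitionistic formulas over atoms `α`, with the
distinguished constant `nconst` (the paper's `n`). -/
inductive Form (α : Type) where
  | atom : α → Form α
  | nconst : Form α
  | top : Form α
  | bot : Form α
  | and : Form α → Form α → Form α
  | or : Form α → Form α → Form α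
  | imp : Form α → Form α → Form α
  | neg : Form α → Form α

/-- Forcing in the two-world Kripke model: world `false` is `t`, world `true`
is `s`, with `t < s` (i.e. the Bool order). `h` assigns to each atom its pair
of truth values (at `t`, at `s`). The constant `n` has value `(⊥,⊤)`. -/
def force {α : Type} (h : α → Bool × Bool) : Bool → Form α → Prop
  | w, .atom x => (if w then (h x).2 else (h x).1) = true
  | w, .nconst => w = true
  | _, .top => True
  | _, .bot => False
  | w, .and A B => force h w A ∧ force h w B
  | w, .or A B => force h w A ∨ force h w B
  | w, .imp A B => ∀ v : Bool, w ≤ v → force h v A → force h v B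
  | w, .neg A => ∀ v : Bool, w ≤ v → ¬ force h v A

/-- An assignment is legitimate when no atom gets the forbidden value `(⊤,⊥)`. -/
def Persistent {α : Type} (h : α → Bool × Bool) : Prop :=
  ∀ x, (h x).1 = true → (h x).2 = true

/-! At the top world `s` forcing is classical, and at `t` an implication or negation only has
to be checked at `t` and at `s`. So at `t` every formula reduces to a statement about the two
truth values of its subformulas, with `t`-truth implying `s`-truth by persistence, and each
axiom becomes a propositional tautology in these values. In the Peirce instance the inner
formula `((y→z)→y)→y` is classical Peirce, hence true at `s`. -/

section Forcing

variable {α : Type} {h : α → Bool × Bool}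

theorem force_or_iff {w : Bool} {A B : Form α} :
    force h w (.or A B) ↔ force h w A ∨ force h w B :=
  Iff.rfl

theorem force_true_imp_iff {A B : Form α} :
    force h true (.imp A B) ↔ (force h true A → force h true B) := by
  simp [force]

theorem force_false_imp_iff {A B : Form α} :
    force h false (.imp A B) ↔
      (force h false A → force h false B) ∧ (force h true A → force h true B) := by
  simp [force, Bool.forall_bool]

theorem force_false_neg_iff {A : Form α} :
    force h false (.neg A) ↔ ¬ force h false A ∧ ¬ force h true A := by
  simp [force, Bool.forall_bool]

theorem force_true_of_force_false (hp : Persistent h) :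
    ∀ {A : Form α}, force h false A → force h true A
  | .atom x, hx => hp x hx
  | .nconst, _ => rfl
  | .top, _ => trivial
  | .and _ _, ⟨hA, hB⟩ => ⟨force_true_of_force_false hp hA, force_true_of_force_false hp hB⟩
  | .or _ _, .inl hA => .inl (force_true_of_force_false hp hA)
  | .or _ _, .inr hB => .inr (force_true_of_force_false hp hB)
  | .imp _ _, hAB => fun v _ => hAB v (Bool.false_le v)
  | .neg _, hA => fun v _ => hA v (Bool.false_le v)

theorem force_dummett (hp : Persistent h) (A B : Form α) :
    force h false (.or (.imp A B) (.imp B A)) := by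
  have hA := force_true_of_force_false hp (A := A)
  have hB := force_true_of_force_false hp (A := B)
  simp only [force_or_iff, force_false_imp_iff]
  tauto

theorem force_peirce₂ (A B C : Form α) :
    force h false (.imp (.imp (.imp A (.imp (.imp (.imp B C) B) B)) A) A) := by
  have hPeirce : force h true (.imp (.imp (.imp B C) B) B) := by
    simp only [force_true_imp_iff]
    tauto
  simp only [force_false_imp_iff, force_true_imp_iff] at hPeirce ⊢
  tauto

theorem force_umezawa (hp : Persistent h) (A B : Form α) :
    force h false (.or A (.or (.neg B) (.imp A B))) := by
  have hB := force_true_of_force_false hp (A := B)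
  simp only [force_or_iff, force_false_imp_iff, force_false_neg_iff]
  tauto

end Forcing

/-- Every substitution instance of the Dummett axiom `(x→y)∨(y→x)`, of the
height-2 Peirce axiom `((x→(((y→z)→y)→y))→x)→x`, and of the Umezawa axiom
`x∨(¬y∨(x→y))` holds at the world `t` under every assignment. -/
theorem stmt14 {α : Type} (A B C : Form α) (h : α → Bool × Bool) (hp : Persistent h) :
    force h false (.or (.imp A B) (.imp B A)) ∧
    force h false (.imp (.imp (.imp A (.imp (.imp (.imp B C) B) B)) A) A) ∧
    force h false (.or A (.or (.neg B) (.imp A B))) :=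
  ⟨force_dummett hp A B, force_peirce₂ A B C, force_umezawa hp A B⟩
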